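/- arXiv:1401.6697 — 9 statements merged into one kernel-verified Lean document; each statement's English description precedes it below -/
import Mathlib

section
/- Every monotone, normalized, non-negative submodular set function is weakly submodular; that is, if f(∅)=0, f is monotone and f(S)+f(T) ≥ f(S∪T)+f(S∩T) for all S,T, then |T|·f(S)+|S|·f(T) ≥ |S∩T|·f(S∪T)+|S∪T|·f(S∩T) for all finite sets S,T. -/
theorem submodular_is_weakly_submodular {U : Type*} [DecidableEq U]
    (f : Finset U → ℝ)
    (hnorm : f ∅ = 0)
    (hnonneg : ∀ S : Finset U, 0 ≤ f S)
    (hmono : ∀ S T : Finset U, S ⊆ T → f S ≤ f T)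
    (hsub : ∀ S T : Finset U, f (S ∪ T) + f (S ∩ T) ≤ f S + f T) :
    ∀ S T : Finset U,
      ((S ∩ T).card : ℝ) * f (S ∪ T) + ((S ∪ T).card : ℝ) * f (S ∩ T) ≤
        (T.card : ℝ) * f S + (S.card : ℝ) * f T := by
  intro S T
  have h1 := hsub S T
  have h2 := hmono (S ∩ T) S Finset.inter_subset_left
  have h3 := hmono (S ∩ T) T Finset.inter_subset_right
  have hc : ((S ∪ T).card : ℝ) + ((S ∩ T).card : ℝ) = (S.card : ℝ) + (T.card : ℝ) := by
    have := Finset.card_union_add_card_inter S T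
    exact_mod_cast congrArg (Nat.cast (R := ℝ)) this
  have ha : ((S ∩ T).card : ℝ) ≤ (S.card : ℝ) := by
    exact_mod_cast Finset.card_le_card Finset.inter_subset_left
  have hb : ((S ∩ T).card : ℝ) ≤ (T.card : ℝ) := by
    exact_mod_cast Finset.card_le_card Finset.inter_subset_right
  have hz : (0:ℝ) ≤ ((S ∩ T).card : ℝ) := by positivity
  have hu : ((S ∪ T).card : ℝ) = (S.card : ℝ) + (T.card : ℝ) - ((S ∩ T).card : ℝ) := by
    linarith
  rw [hu]
  nlinarith [mul_le_mul_of_nonneg_left h1 hz,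
    mul_le_mul_of_nonneg_left h2 (sub_nonneg.mpr hb),
    mul_le_mul_of_nonneg_left h3 (sub_nonneg.mpr ha)]
end

section
/- There exists a non-monotone submodular function that is not weakly submodular. Specifically, for the graph G on vertex set R ∪ {s,t} with |R| = n ≥ 1 and edges {(s,u),(u,t) : u ∈ R}, the cut function f(S) = number of edges with exactly one endpoint in S is submodular but violates the weak submodularity inequality for S = R ∪ {s} and T = R ∪ {t}. -/
theorem cut_function_submodular_not_weakly_submodular
    {V : Type*} [DecidableEq V] (R : Finset V) (s t : V)
    (hs : s ∉ R) (ht : t ∉ R) (hst : s ≠ t) (hR : R.Nonempty)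
    (E : Finset (V × V))
    (hE : E = R.image (fun u => (s, u)) ∪ R.image (fun u => (u, t)))
    (f : Finset V → ℝ)
    (hf : ∀ S : Finset V,
      f S = ((E.filter (fun e => (e.1 ∈ S ∧ e.2 ∉ S) ∨ (e.1 ∉ S ∧ e.2 ∈ S))).card : ℝ)) :
    (∀ A B : Finset V, f (A ∪ B) + f (A ∩ B) ≤ f A + f B) ∧
      ¬ (((((R ∪ {s}) ∩ (R ∪ {t})).card : ℝ) * f ((R ∪ {s}) ∪ (R ∪ {t})) +
            (((R ∪ {s}) ∪ (R ∪ {t})).card : ℝ) * f ((R ∪ {s}) ∩ (R ∪ {t}))) ≤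
          (((R ∪ {t}).card : ℝ) * f (R ∪ {s}) + ((R ∪ {s}).card : ℝ) * f (R ∪ {t}))) := by
  have hinj1 : Function.Injective (fun u : V => (s, u)) := by
    intro a b h; simpa using h
  have hinj2 : Function.Injective (fun u : V => (u, t)) := by
    intro a b h; simpa using h
  constructor
  · intro A B
    have hf' : ∀ S : Finset V, f S =
        ∑ e ∈ E, (if (e.1 ∈ S ∧ e.2 ∉ S) ∨ (e.1 ∉ S ∧ e.2 ∈ S) then (1:ℝ) else 0) := by
      intro S
      rw [hf, Finset.sum_boole]
    rw [hf', hf', hf', hf', ← Finset.sum_add_distrib, ← Finset.sum_add_distrib]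
    apply Finset.sum_le_sum
    intro e _
    by_cases h1 : e.1 ∈ A <;> by_cases h2 : e.1 ∈ B <;>
      by_cases h3 : e.2 ∈ A <;> by_cases h4 : e.2 ∈ B <;>
      simp [Finset.mem_union, Finset.mem_inter, h1, h2, h3, h4]
  · have hI : (R ∪ {s}) ∩ (R ∪ {t}) = R := by
      ext x
      simp only [Finset.mem_inter, Finset.mem_union, Finset.mem_singleton]
      constructor
      · rintro ⟨h1 | h1, h2 | h2⟩ <;> first | exact h1 | exact h2 |
          (exfalso; exact hst (h1.symm.trans h2))
      · intro h; exact ⟨Or.inl h, Or.inl h⟩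
    have hU : (R ∪ {s}) ∪ (R ∪ {t}) = (R ∪ {s}) ∪ {t} := by
      ext x
      simp only [Finset.mem_union, Finset.mem_singleton]
      tauto
    -- f on R ∪ {s}
    have f1 : f (R ∪ {s}) = (R.card : ℝ) := by
      rw [hf, hE, Finset.filter_union, Finset.filter_image, Finset.filter_image]
      have e1 : R.filter (fun u =>
          ((s, u).1 ∈ R ∪ {s} ∧ (s, u).2 ∉ R ∪ {s}) ∨ ((s, u).1 ∉ R ∪ {s} ∧ (s, u).2 ∈ R ∪ {s})) = ∅ := by
        apply Finset.filter_false_of_mem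
        intro u hu
        simp [Finset.mem_union, hu]
      have e2 : R.filter (fun u =>
          ((u, t).1 ∈ R ∪ {t} ∧ False) ∨ True) = R := by exact Finset.filter_true_of_mem (by simp)
      have e2' : R.filter (fun u =>
          ((u, t).1 ∈ R ∪ {s} ∧ (u, t).2 ∉ R ∪ {s}) ∨ ((u, t).1 ∉ R ∪ {s} ∧ (u, t).2 ∈ R ∪ {s})) = R := by
        apply Finset.filter_true_of_mem
        intro u hu
        simp [Finset.mem_union, hu, ht, hst.symm]
      rw [e1, e2']
      simp [Finset.card_image_of_injective _ hinj2]
    have f2 : f (R ∪ {t}) = (R.card : ℝ) := by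
      rw [hf, hE, Finset.filter_union, Finset.filter_image, Finset.filter_image]
      have e1 : R.filter (fun u =>
          ((s, u).1 ∈ R ∪ {t} ∧ (s, u).2 ∉ R ∪ {t}) ∨ ((s, u).1 ∉ R ∪ {t} ∧ (s, u).2 ∈ R ∪ {t})) = R := by
        apply Finset.filter_true_of_mem
        intro u hu
        simp [Finset.mem_union, hu, hs, hst]
      have e2 : R.filter (fun u =>
          ((u, t).1 ∈ R ∪ {t} ∧ (u, t).2 ∉ R ∪ {t}) ∨ ((u, t).1 ∉ R ∪ {t} ∧ (u, t).2 ∈ R ∪ {t})) = ∅ := by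
        apply Finset.filter_false_of_mem
        intro u hu
        simp [Finset.mem_union, hu]
      rw [e1, e2]
      simp [Finset.card_image_of_injective _ hinj1]
    have fU : f ((R ∪ {s}) ∪ (R ∪ {t})) = 0 := by
      rw [hf, hE, Finset.filter_union, Finset.filter_image, Finset.filter_image]
      have e1 : R.filter (fun u =>
          ((s, u).1 ∈ (R ∪ {s}) ∪ (R ∪ {t}) ∧ (s, u).2 ∉ (R ∪ {s}) ∪ (R ∪ {t})) ∨
          ((s, u).1 ∉ (R ∪ {s}) ∪ (R ∪ {t}) ∧ (s, u).2 ∈ (R ∪ {s}) ∪ (R ∪ {t}))) = ∅ := by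
        apply Finset.filter_false_of_mem
        intro u hu
        simp [Finset.mem_union, hu]
      have e2 : R.filter (fun u =>
          ((u, t).1 ∈ (R ∪ {s}) ∪ (R ∪ {t}) ∧ (u, t).2 ∉ (R ∪ {s}) ∪ (R ∪ {t})) ∨
          ((u, t).1 ∉ (R ∪ {s}) ∪ (R ∪ {t}) ∧ (u, t).2 ∈ (R ∪ {s}) ∪ (R ∪ {t}))) = ∅ := by
        apply Finset.filter_false_of_mem
        intro u hu
        simp [Finset.mem_union, hu]
      rw [e1, e2]
      simp
    have hdisj : Disjoint (R.image (fun u => (s, u))) (R.image (fun u => (u, t))) := by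
      rw [Finset.disjoint_left]
      rintro e he1 he2
      simp only [Finset.mem_image] at he1 he2
      obtain ⟨a, ha, rfl⟩ := he1
      obtain ⟨b, hb, hba⟩ := he2
      have : b = s := by simpa using congrArg Prod.fst hba
      exact hs (this ▸ hb)
    have fI : f ((R ∪ {s}) ∩ (R ∪ {t})) = 2 * (R.card : ℝ) := by
      rw [hf, hI]
      have : E.filter (fun e => (e.1 ∈ R ∧ e.2 ∉ R) ∨ (e.1 ∉ R ∧ e.2 ∈ R)) = E := by
        apply Finset.filter_true_of_mem
        intro e he
        rw [hE, Finset.mem_union] at he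
        rcases he with he | he <;> simp only [Finset.mem_image] at he <;>
          obtain ⟨a, ha, rfl⟩ := he
        · exact Or.inr ⟨hs, ha⟩
        · exact Or.inl ⟨ha, ht⟩
      rw [this, hE, Finset.card_union_of_disjoint hdisj,
        Finset.card_image_of_injective _ hinj1, Finset.card_image_of_injective _ hinj2]
      push_cast
      ring
    have cardS : ((R ∪ {s}).card : ℝ) = (R.card : ℝ) + 1 := by
      rw [Finset.card_union_of_disjoint (by simpa using hs)]
      simp
    have cardT : ((R ∪ {t}).card : ℝ) = (R.card : ℝ) + 1 := by
      rw [Finset.card_union_of_disjoint (by simpa using ht)]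
      simp
    have cardU : (((R ∪ {s}) ∪ (R ∪ {t})).card : ℝ) = (R.card : ℝ) + 2 := by
      rw [hU, Finset.card_union_of_disjoint
        (by
          simp only [Finset.disjoint_left, Finset.mem_union, Finset.mem_singleton]
          rintro a (h | rfl) rfl
          · exact ht h
          · exact hst rfl),
        Finset.card_union_of_disjoint (by simpa using hs)]
      simp
      ring
    have cardI : (((R ∪ {s}) ∩ (R ∪ {t})).card : ℝ) = (R.card : ℝ) := by rw [hI]
    rw [f1, f2, fU, fI, cardS, cardT, cardU, cardI]
    have hn : (1 : ℝ) ≤ (R.card : ℝ) := by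
      exact_mod_cast Finset.one_le_card.mpr hR
    push_neg
    nlinarith [hn]
end

section
/- The sum-of-metric-distances function d(S) = Σ_{{u,v}⊆S} d(u,v) on a finite metric space is weakly submodular: for all subsets S,T, |T|·d(S)+|S|·d(T) ≥ |S∩T|·d(S∪T)+|S∪T|·d(S∩T). -/
namespace WeakSubmodAux

variable {U : Type*} [DecidableEq U]

/-- Sum of distances over pairs in X × Y. -/
def Dsum (d : U → U → ℝ) (X Y : Finset U) : ℝ := ∑ u ∈ X, ∑ v ∈ Y, d u v

lemma Dsum_nonneg {d : U → U → ℝ} (hnonneg : ∀ u v, 0 ≤ d u v) (X Y : Finset U) :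
    0 ≤ Dsum d X Y :=
  Finset.sum_nonneg fun _ _ => Finset.sum_nonneg fun _ _ => hnonneg _ _

lemma Dsum_comm {d : U → U → ℝ} (hsymm : ∀ u v, d u v = d v u) (X Y : Finset U) :
    Dsum d X Y = Dsum d Y X := by
  unfold Dsum
  rw [Finset.sum_comm]
  exact Finset.sum_congr rfl fun v _ => Finset.sum_congr rfl fun u _ => hsymm u v

lemma Dsum_union_left {d : U → U → ℝ} {X Y : Finset U} (h : Disjoint X Y) (Z : Finset U) :
    Dsum d (X ∪ Y) Z = Dsum d X Z + Dsum d Y Z := by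
  unfold Dsum
  exact Finset.sum_union h

lemma Dsum_union_right {d : U → U → ℝ} {X Y : Finset U} (h : Disjoint X Y) (Z : Finset U) :
    Dsum d Z (X ∪ Y) = Dsum d Z X + Dsum d Z Y := by
  unfold Dsum
  rw [← Finset.sum_add_distrib]
  exact Finset.sum_congr rfl fun u _ => Finset.sum_union h

lemma key {d : U → U → ℝ} (htri : ∀ u v w, d u v ≤ d u w + d w v)
    (A B I : Finset U) :
    (I.card : ℝ) * Dsum d A B ≤
      (B.card : ℝ) * Dsum d A I + (A.card : ℝ) * Dsum d I B := by
  unfold Dsum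
  calc (I.card : ℝ) * ∑ x ∈ A, ∑ y ∈ B, d x y
      = ∑ x ∈ A, ∑ y ∈ B, ∑ _w ∈ I, d x y := by
        simp [Finset.mul_sum, Finset.sum_mul, Finset.sum_const, nsmul_eq_mul, mul_comm]
    _ ≤ ∑ x ∈ A, ∑ y ∈ B, ∑ w ∈ I, (d x w + d w y) := by
        refine Finset.sum_le_sum fun x _ => Finset.sum_le_sum fun y _ =>
          Finset.sum_le_sum fun w _ => htri x y w
    _ = (B.card : ℝ) * (∑ x ∈ A, ∑ w ∈ I, d x w)
        + (A.card : ℝ) * (∑ w ∈ I, ∑ y ∈ B, d w y) := by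
        simp only [Finset.sum_add_distrib, Finset.sum_const, nsmul_eq_mul, Finset.mul_sum]
        rw [Finset.sum_comm (s := B) (t := I)]

lemma Dsum_union_union {d : U → U → ℝ} {X Y : Finset U} (h : Disjoint X Y) :
    Dsum d (X ∪ Y) (X ∪ Y) = Dsum d X X + Dsum d X Y + Dsum d Y X + Dsum d Y Y := by
  rw [Dsum_union_left h, Dsum_union_right h, Dsum_union_right h]
  ring

end WeakSubmodAux

theorem sum_metric_distances_weakly_submodular
    {U : Type*} [DecidableEq U] (d : U → U → ℝ)
    (hsymm : ∀ u v, d u v = d v u)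
    (hself : ∀ u, d u u = 0)
    (hnonneg : ∀ u v, 0 ≤ d u v)
    (htri : ∀ u v w, d u v ≤ d u w + d w v)
    (f : Finset U → ℝ)
    (hf : ∀ S : Finset U, f S = (∑ u ∈ S, ∑ v ∈ S, d u v) / 2) :
    ∀ S T : Finset U,
      ((S ∩ T).card : ℝ) * f (S ∪ T) + ((S ∪ T).card : ℝ) * f (S ∩ T) ≤
        (T.card : ℝ) * f S + (S.card : ℝ) * f T := by
  intro S T
  open WeakSubmodAux in
  have hfs : ∀ X : Finset U, f X = Dsum d X X / 2 := fun X => hf X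
  have hAI : Disjoint (S \ T) (S ∩ T) :=
    Finset.sdiff_disjoint.mono_right Finset.inter_subset_right
  have hBI : Disjoint (T \ S) (S ∩ T) :=
    Finset.sdiff_disjoint.mono_right Finset.inter_subset_left
  have hT : (T \ S) ∪ (S ∩ T) = T := by
    rw [Finset.inter_comm]; exact Finset.sdiff_union_inter T S
  have hS : (S \ T) ∪ (S ∩ T) = S := Finset.sdiff_union_inter S T
  have hABI : Disjoint (S \ T) ((T \ S) ∪ (S ∩ T)) := by
    rw [hT]; exact Finset.sdiff_disjoint
  have hU : (S \ T) ∪ ((T \ S) ∪ (S ∩ T)) = S ∪ T := by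
    rw [hT, Finset.sdiff_union_self_eq_union]
  set A := S \ T with hA
  set B := T \ S with hB
  set I := S ∩ T with hI
  have cS : (S.card : ℝ) = A.card + I.card := by
    rw [← hS, Finset.card_union_of_disjoint hAI]; push_cast; ring
  have cT : (T.card : ℝ) = B.card + I.card := by
    rw [← hT, Finset.card_union_of_disjoint hBI]; push_cast; ring
  have cU : ((S ∪ T).card : ℝ) = A.card + (B.card + I.card) := by
    rw [← hU, Finset.card_union_of_disjoint hABI, Finset.card_union_of_disjoint hBI]
    push_cast; ring
  have fS : f S = (Dsum d A A + Dsum d A I + Dsum d I A + Dsum d I I) / 2 := by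
    rw [hfs, ← hS, Dsum_union_union hAI]
  have fT : f T = (Dsum d B B + Dsum d B I + Dsum d I B + Dsum d I I) / 2 := by
    rw [hfs, ← hT, Dsum_union_union hBI]
  have fU : f (S ∪ T) = (Dsum d A A + (Dsum d A B + Dsum d A I)
      + (Dsum d B A + Dsum d I A)
      + (Dsum d B B + Dsum d B I + Dsum d I B + Dsum d I I)) / 2 := by
    rw [hfs, ← hU, Dsum_union_union hABI, Dsum_union_right hBI, Dsum_union_left hBI,
      Dsum_union_union hBI]
  have fI : f I = Dsum d I I / 2 := hfs I
  have e1 : Dsum d I A = Dsum d A I := Dsum_comm hsymm I A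
  have e2 : Dsum d B A = Dsum d A B := Dsum_comm hsymm B A
  have e3 : Dsum d I B = Dsum d B I := Dsum_comm hsymm I B
  have hk : (I.card : ℝ) * Dsum d A B ≤
      (B.card : ℝ) * Dsum d A I + (A.card : ℝ) * Dsum d I B := key htri A B I
  have ha : 0 ≤ (B.card : ℝ) * Dsum d A A :=
    mul_nonneg (Nat.cast_nonneg _) (Dsum_nonneg hnonneg A A)
  have hb : 0 ≤ (A.card : ℝ) * Dsum d B B :=
    mul_nonneg (Nat.cast_nonneg _) (Dsum_nonneg hnonneg B B)
  rw [fS, fT, fU, fI, cS, cT, cU]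
  rw [e3] at hk
  nlinarith [hk, ha, hb]
end

section
/- For disjoint subsets A, B, C of a finite metric space, |B|·d(A,C) + |A|·d(B,C) ≥ |C|·d(A,B), where d(X,Y) = Σ_{u∈X, v∈Y} d(u,v). -/
theorem disjoint_triple_distance_inequality
    {U : Type*} [DecidableEq U] (d : U → U → ℝ)
    (hsymm : ∀ u v, d u v = d v u)
    (hself : ∀ u, d u u = 0)
    (hnonneg : ∀ u v, 0 ≤ d u v)
    (htri : ∀ u v w, d u v ≤ d u w + d w v)
    (A B C : Finset U)
    (hAB : Disjoint A B) (hAC : Disjoint A C) (hBC : Disjoint B C) :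
    (C.card : ℝ) * (∑ u ∈ A, ∑ v ∈ B, d u v) ≤
      (B.card : ℝ) * (∑ u ∈ A, ∑ v ∈ C, d u v) +
        (A.card : ℝ) * (∑ u ∈ B, ∑ v ∈ C, d u v) := by
  have key : ∀ w ∈ C, (∑ u ∈ A, ∑ v ∈ B, d u v) ≤
      (B.card : ℝ) * (∑ u ∈ A, d u w) + (A.card : ℝ) * (∑ v ∈ B, d w v) := by
    intro w _
    calc ∑ u ∈ A, ∑ v ∈ B, d u v
        ≤ ∑ u ∈ A, ∑ v ∈ B, (d u w + d w v) := by
          apply Finset.sum_le_sum; intro u _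
          apply Finset.sum_le_sum; intro v _
          exact htri u v w
      _ = (B.card : ℝ) * (∑ u ∈ A, d u w) + (A.card : ℝ) * (∑ v ∈ B, d w v) := by
          simp [Finset.sum_add_distrib, Finset.mul_sum, Finset.sum_const,
            mul_comm, Finset.sum_comm]
  calc (C.card : ℝ) * (∑ u ∈ A, ∑ v ∈ B, d u v)
      = ∑ w ∈ C, (∑ u ∈ A, ∑ v ∈ B, d u v) := by
        rw [Finset.sum_const, nsmul_eq_mul]
    _ ≤ ∑ w ∈ C, ((B.card : ℝ) * (∑ u ∈ A, d u w) + (A.card : ℝ) * (∑ v ∈ B, d w v)) :=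
        Finset.sum_le_sum key
    _ = (B.card : ℝ) * (∑ u ∈ A, ∑ v ∈ C, d u v) +
        (A.card : ℝ) * (∑ u ∈ B, ∑ v ∈ C, d u v) := by
        rw [Finset.sum_add_distrib, ← Finset.mul_sum, ← Finset.mul_sum,
          Finset.sum_comm]
        congr 1
        rw [Finset.sum_comm]
        simp [hsymm]
end

section
/- For B > 0, the threshold function f₂ with f₂(S) = B if |S| ≥ 2 and f₂(S) = 0 otherwise is weakly submodular. -/
theorem threshold_two_weakly_submodular {U : Type*} [DecidableEq U]
    (B : ℝ) (hB : 0 < B)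
    (f : Finset U → ℝ) (hf : ∀ S : Finset U, f S = if 2 ≤ S.card then B else 0) :
    ∀ S T : Finset U,
      ((S ∩ T).card : ℝ) * f (S ∪ T) + ((S ∪ T).card : ℝ) * f (S ∩ T) ≤
        (T.card : ℝ) * f S + (S.card : ℝ) * f T := by
  intro S T
  have h1 := Finset.card_union_add_card_inter S T
  have h2 : (S ∩ T).card ≤ S.card :=
    Finset.card_le_card (Finset.inter_subset_left : S ∩ T ⊆ S)
  have h3 : (S ∩ T).card ≤ T.card :=
    Finset.card_le_card (Finset.inter_subset_right : S ∩ T ⊆ T)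
  have h4 : S.card ≤ (S ∪ T).card := Finset.card_le_card Finset.subset_union_left
  have h5 : T.card ≤ (S ∪ T).card := Finset.card_le_card Finset.subset_union_right
  have hfB : ∀ X : Finset U, 2 ≤ X.card → f X = B := by
    intro X hX; rw [hf X, if_pos hX]
  have hf0 : ∀ X : Finset U, X.card < 2 → f X = 0 := by
    intro X hX; rw [hf X, if_neg (by omega)]
  by_cases hi : 2 ≤ (S ∩ T).card
  · -- everything has card ≥ 2
    rw [hfB (S ∩ T) hi, hfB (S ∪ T) (by omega), hfB S (by omega), hfB T (by omega)]
    have : ((S ∪ T).card : ℝ) + ((S ∩ T).card : ℝ) = (S.card : ℝ) + (T.card : ℝ) := by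
      exact_mod_cast congrArg (Nat.cast : ℕ → ℝ) h1
    nlinarith [this]
  · push_neg at hi
    rw [hf0 (S ∩ T) hi]
    by_cases hu : 2 ≤ (S ∪ T).card
    · rw [hfB (S ∪ T) hu]
      -- i ≤ 1, LHS = i * B
      by_cases hi0 : (S ∩ T).card = 0
      · rw [hi0]
        have rS : 0 ≤ f S := by rw [hf S]; split <;> linarith
        have rT : 0 ≤ f T := by rw [hf T]; split <;> linarith
        push_cast
        nlinarith [(Nat.cast_nonneg S.card : (0:ℝ) ≤ _), (Nat.cast_nonneg T.card : (0:ℝ) ≤ _), rS, rT]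
      · -- i = 1, so a ≥ 2 or b ≥ 2
        have hi1 : (S ∩ T).card = 1 := by omega
        rw [hi1]
        have hab : 2 ≤ S.card ∨ 2 ≤ T.card := by omega
        have rS : 0 ≤ f S := by rw [hf S]; split <;> linarith
        have rT : 0 ≤ f T := by rw [hf T]; split <;> linarith
        rcases hab with h | h
        · rw [hfB S h]
          have hb1 : (1:ℝ) ≤ (T.card : ℝ) := by exact_mod_cast (by omega : 1 ≤ T.card)
          push_cast
          nlinarith [mul_nonneg (Nat.cast_nonneg S.card : (0:ℝ) ≤ _) rT, mul_le_mul_of_nonneg_right hb1 hB.le]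
        · rw [hfB T h]
          have ha1 : (1:ℝ) ≤ (S.card : ℝ) := by exact_mod_cast (by omega : 1 ≤ S.card)
          push_cast
          nlinarith [mul_nonneg (Nat.cast_nonneg T.card : (0:ℝ) ≤ _) rS, mul_le_mul_of_nonneg_right ha1 hB.le]
    · push_neg at hu
      rw [hf0 (S ∪ T) hu, hf0 S (by omega), hf0 T (by omega)]
      simp
end

section
/- For every k ≥ 3 and B > 0, the threshold function f_k(S) = B if |S| ≥ k, else 0, fails to be weakly submodular on any universe of size at least 2k−3 (in fact, witnessed by sets S, T of size k−1 with |S∩T| = 1). -/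
theorem threshold_k_not_weakly_submodular {U : Type*} [DecidableEq U] [Fintype U]
    (k : ℕ) (hk : 3 ≤ k) (hU : 2 * k - 3 ≤ Fintype.card U)
    (B : ℝ) (hB : 0 < B)
    (f : Finset U → ℝ) (hf : ∀ S : Finset U, f S = if k ≤ S.card then B else 0) :
    ∃ S T : Finset U, S.card = k - 1 ∧ T.card = k - 1 ∧ (S ∩ T).card = 1 ∧
      ¬ (((S ∩ T).card : ℝ) * f (S ∪ T) + ((S ∪ T).card : ℝ) * f (S ∩ T) ≤
          (T.card : ℝ) * f S + (S.card : ℝ) * f T) := by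
  obtain ⟨A, -, hA⟩ := Finset.exists_subset_card_eq (s := (Finset.univ : Finset U))
    (n := 2 * k - 3) (by simpa using hU)
  obtain ⟨S, hSA, hS⟩ := Finset.exists_subset_card_eq (s := A) (n := k - 1)
    (by rw [hA]; omega)
  have hSne : S.Nonempty := Finset.card_pos.mp (by omega)
  obtain ⟨x, hx⟩ := hSne
  set T : Finset U := insert x (A \ S) with hT
  have hAS : (A \ S).card = k - 2 := by
    rw [Finset.card_sdiff_of_subset hSA, hA, hS]; omega
  have hxn : x ∉ A \ S := by simp [hx]
  have hTcard : T.card = k - 1 := by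
    rw [hT, Finset.card_insert_of_notMem hxn, hAS]; omega
  have hint : S ∩ T = {x} := by
    ext y
    simp only [hT, Finset.mem_inter, Finset.mem_insert, Finset.mem_sdiff,
      Finset.mem_singleton]
    constructor
    · rintro ⟨hyS, hy | ⟨-, hyns⟩⟩
      · exact hy
      · exact absurd hyS hyns
    · rintro rfl; exact ⟨hx, Or.inl rfl⟩
  have hintcard : (S ∩ T).card = 1 := by rw [hint]; simp
  have hunion : k ≤ (S ∪ T).card := by
    have := Finset.card_union_add_card_inter S T
    rw [hS, hTcard, hintcard] at this
    omega
  refine ⟨S, T, hS, hTcard, hintcard, ?_⟩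
  rw [hf, hf, hf, hf, if_pos hunion, if_neg (by omega), if_neg (by rw [hS]; omega),
    if_neg (by rw [hTcard]; omega), hintcard]
  intro h
  push_cast at h
  nlinarith
end

section
/- Every average non-negative segmentation function is weakly submodular: if every row of M sums to a non-negative value, then σ(S) = Σ_j max_{i∈S} M_{ij} (σ(∅)=0) satisfies |T|·σ(S)+|S|·σ(T) ≥ |S∩T|·σ(S∪T)+|S∪T|·σ(S∩T) for all S,T ⊆ [m]. -/
theorem segmentation_weakly_submodular {m n : ℕ} (M : Fin m → Fin n → ℝ)
    (hrow : ∀ i : Fin m, 0 ≤ ∑ j : Fin n, M i j)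
    (σ : Finset (Fin m) → ℝ)
    (hσ : ∀ S : Finset (Fin m),
      σ S = if h : S.Nonempty then ∑ j : Fin n, S.sup' h (fun i => M i j) else 0) :
    ∀ S T : Finset (Fin m),
      ((S ∩ T).card : ℝ) * σ (S ∪ T) + ((S ∪ T).card : ℝ) * σ (S ∩ T) ≤
        (T.card : ℝ) * σ S + (S.card : ℝ) * σ T := by
  have hnn : ∀ S : Finset (Fin m), 0 ≤ σ S := by
    intro S
    rw [hσ S]
    split_ifs with h
    · obtain ⟨i, hi⟩ := h.exists_mem
      calc (0:ℝ) ≤ ∑ j : Fin n, M i j := hrow i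
        _ ≤ ∑ j : Fin n, S.sup' h (fun i => M i j) :=
            Finset.sum_le_sum (fun j _ => Finset.le_sup' (fun i => M i j) hi)
    · exact le_refl 0
  have hmono : ∀ (A B : Finset (Fin m)) (hA : A.Nonempty) (hB : B.Nonempty),
      A ⊆ B → σ A ≤ σ B := by
    intro A B hA hB hAB
    rw [hσ A, hσ B, dif_pos hA, dif_pos hB]
    refine Finset.sum_le_sum (fun j _ => ?_)
    exact Finset.sup'_le hA _ (fun i hi => Finset.le_sup' (fun i => M i j) (hAB hi))
  intro S T
  by_cases hST : (S ∩ T).Nonempty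
  · have hS : S.Nonempty := hST.mono Finset.inter_subset_left
    have hT : T.Nonempty := hST.mono Finset.inter_subset_right
    have hU : (S ∪ T).Nonempty := hS.mono Finset.subset_union_left
    -- pointwise submodularity
    have hsub : σ (S ∪ T) + σ (S ∩ T) ≤ σ S + σ T := by
      rw [hσ (S ∪ T), hσ (S ∩ T), hσ S, hσ T, dif_pos hU, dif_pos hST,
        dif_pos hS, dif_pos hT, ← Finset.sum_add_distrib, ← Finset.sum_add_distrib]
      refine Finset.sum_le_sum (fun j _ => ?_)
      obtain ⟨i, hi, hieq⟩ := Finset.exists_mem_eq_sup' hU (fun i => M i j)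
      rcases Finset.mem_union.mp hi with hiS | hiT
      · have h1 : (S ∪ T).sup' hU (fun i => M i j) ≤ S.sup' hS (fun i => M i j) := by
          rw [hieq]; exact Finset.le_sup' (fun i => M i j) hiS
        have h2 : (S ∩ T).sup' hST (fun i => M i j) ≤ T.sup' hT (fun i => M i j) :=
          Finset.sup'_le hST _ (fun k hk =>
            Finset.le_sup' (fun i => M i j) (Finset.mem_of_mem_inter_right hk))
        linarith
      · have h1 : (S ∪ T).sup' hU (fun i => M i j) ≤ T.sup' hT (fun i => M i j) := by
          rw [hieq]; exact Finset.le_sup' (fun i => M i j) hiT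
        have h2 : (S ∩ T).sup' hST (fun i => M i j) ≤ S.sup' hS (fun i => M i j) :=
          Finset.sup'_le hST _ (fun k hk =>
            Finset.le_sup' (fun i => M i j) (Finset.mem_of_mem_inter_left hk))
        linarith
    have hmS : σ (S ∩ T) ≤ σ S := hmono _ _ hST hS Finset.inter_subset_left
    have hmT : σ (S ∩ T) ≤ σ T := hmono _ _ hST hT Finset.inter_subset_right
    have hcard : ((S ∩ T).card : ℝ) + ((S ∪ T).card : ℝ) = (S.card : ℝ) + (T.card : ℝ) := by
      have := Finset.card_inter_add_card_union S T
      exact_mod_cast congrArg (Nat.cast : ℕ → ℝ) this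
    have haS : ((S ∩ T).card : ℝ) ≤ (S.card : ℝ) := by
      exact_mod_cast Finset.card_le_card Finset.inter_subset_left
    have haT : ((S ∩ T).card : ℝ) ≤ (T.card : ℝ) := by
      exact_mod_cast Finset.card_le_card Finset.inter_subset_right
    have h0 : (0:ℝ) ≤ ((S ∩ T).card : ℝ) := Nat.cast_nonneg _
    have p1 : 0 ≤ ((T.card:ℝ) - (S ∩ T).card) * (σ S - σ (S ∩ T)) :=
      mul_nonneg (by linarith) (by linarith)
    have p2 : 0 ≤ ((S.card:ℝ) - (S ∩ T).card) * (σ T - σ (S ∩ T)) :=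
      mul_nonneg (by linarith) (by linarith)
    have p3 : 0 ≤ ((S ∩ T).card:ℝ) * (σ S + σ T - σ (S ∪ T) - σ (S ∩ T)) :=
      mul_nonneg h0 (by linarith)
    have p4 : (((S ∩ T).card:ℝ) + ((S ∪ T).card:ℝ)) * σ (S ∩ T)
        = (((S.card:ℝ)) + ((T.card:ℝ))) * σ (S ∩ T) := by rw [hcard]
    nlinarith [p1, p2, p3, p4]
  · have h1 : σ (S ∩ T) = 0 := by
      rw [hσ (S ∩ T), dif_neg hST]
    have h2 : ((S ∩ T).card : ℝ) = 0 := by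
      rw [Finset.not_nonempty_iff_eq_empty.mp hST]; simp
    rw [h1, h2]
    have := hnn S; have := hnn T
    have : (0:ℝ) ≤ (T.card : ℝ) * σ S + (S.card : ℝ) * σ T := by
      positivity
    linarith
end

section
/- There is a function of supermodular degree 1 that is not weakly submodular: on universe U = {a₁,a₂,b}, the function f(S) = B if {a₁,a₂} ⊆ S and 0 otherwise (B > 0) violates the weak submodularity inequality for S = {a₁,b}, T = {a₂,b}. -/
theorem supermodular_degree_one_not_weakly_submodular
    {U : Type*} [DecidableEq U] (a₁ a₂ b : U)
    (h12 : a₁ ≠ a₂) (h1b : a₁ ≠ b) (h2b : a₂ ≠ b)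
    (B : ℝ) (hB : 0 < B)
    (f : Finset U → ℝ)
    (hf : ∀ S : Finset U, f S = if a₁ ∈ S ∧ a₂ ∈ S then B else 0) :
    ¬ (((({a₁, b} : Finset U) ∩ {a₂, b}).card : ℝ) * f (({a₁, b} : Finset U) ∪ {a₂, b}) +
          ((({a₁, b} : Finset U) ∪ {a₂, b}).card : ℝ) * f (({a₁, b} : Finset U) ∩ {a₂, b}) ≤
        ((({a₂, b} : Finset U)).card : ℝ) * f ({a₁, b} : Finset U) +
          ((({a₁, b} : Finset U)).card : ℝ) * f ({a₂, b} : Finset U)) := by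
  have hinter : (({a₁, b} : Finset U) ∩ {a₂, b}) = {b} := by
    ext x
    simp only [Finset.mem_inter, Finset.mem_insert, Finset.mem_singleton]
    constructor
    · rintro ⟨rfl | rfl, h2 | h2⟩
      exacts [absurd h2 h12, h2, rfl, rfl]
    · rintro rfl; exact ⟨Or.inr rfl, Or.inr rfl⟩
  have hunion : (({a₁, b} : Finset U) ∪ {a₂, b}) = {a₁, a₂, b} := by
    ext x; simp [Finset.mem_union, Finset.mem_insert]; tauto
  rw [hinter, hunion]
  have c1 : ({b} : Finset U).card = 1 := Finset.card_singleton b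
  have c3 : ({a₁, a₂, b} : Finset U).card = 3 := by
    rw [Finset.card_insert_of_notMem (by simp [h12, h1b]),
        Finset.card_insert_of_notMem (by simp [h2b]), Finset.card_singleton]
  have c2 : ({a₁, b} : Finset U).card = 2 := by
    rw [Finset.card_insert_of_notMem (by simp [h1b]), Finset.card_singleton]
  have c2' : ({a₂, b} : Finset U).card = 2 := by
    rw [Finset.card_insert_of_notMem (by simp [h2b]), Finset.card_singleton]
  rw [c1, c3, c2, c2', hf, hf, hf, hf,
      if_pos (by simp), if_neg (by simp [h1b, h2b]),
      if_neg (by simp [Ne.symm h12, h2b]), if_neg (by simp [h12, h1b])]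
  push_neg
  norm_num
  linarith
end

section
/- For 0 < r ≤ 1, the critical value of the local-search approximation ratio satisfies g(x*, r) = (2r² + 8)/(r − 2)², where x* = ((2+r)/(2−r))^{1/r} and g(x,r) = (2x^{2r} − 2r·x^r − 2)/((2−r)·x^r − 2); moreover g(x*, r) is increasing in r on (0,1] with maximum value 10 at r = 1. -/
/-!
Write `t = (2 + r) / (2 - r)`, so that `x* ^ r = t` and `x* ^ (2 r) = t ^ 2`. The defining relation
`(2 - r) t = 2 + r` makes the denominator of `g` equal to `r` and its numerator equal to `r (1 + t ^ 2)`,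
so `g (x*, r) = 1 + t ^ 2`, which is `(2 r ^ 2 + 8) / (r - 2) ^ 2`. Monotonicity follows because
`t = 4 / (2 - r) - 1` is nonnegative and increasing on `[-2, 2)`.
-/

lemma rpow_one_div_rpow_two_mul {t : ℝ} (ht : 0 ≤ t) {r : ℝ} (hr : r ≠ 0) :
    (t ^ (1 / r)) ^ (2 * r) = t ^ 2 := by
  rw [mul_comm, Real.rpow_mul (Real.rpow_nonneg ht _), one_div, Real.rpow_inv_rpow ht hr,
    Real.rpow_two]

lemma div_eq_one_add_sq_of_mul_eq {r t : ℝ} (hr : r ≠ 0) (ht : (2 - r) * t = 2 + r) :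
    (2 * t ^ 2 - 2 * r * t - 2) / ((2 - r) * t - 2) = 1 + t ^ 2 := by
  have hden : (2 - r) * t - 2 = r := by linarith
  have hnum : 2 * t ^ 2 - 2 * r * t - 2 = r * (1 + t ^ 2) := by linear_combination (t + 1) * ht
  rw [hden, hnum, mul_div_cancel_left₀ _ hr]

lemma one_add_sq_div_two_sub {r : ℝ} (hr : r ≠ 2) :
    1 + ((2 + r) / (2 - r)) ^ 2 = (2 * r ^ 2 + 8) / (r - 2) ^ 2 := by
  have : r - 2 ≠ 0 := sub_ne_zero.mpr hr
  have : 2 - r ≠ 0 := sub_ne_zero.mpr hr.symm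
  field_simp
  ring

lemma monotoneOn_two_add_div_two_sub :
    MonotoneOn (fun r : ℝ => (2 + r) / (2 - r)) (Set.Iio 2) := by
  intro r₁ (h₁ : r₁ < 2) r₂ (h₂ : r₂ < 2) h
  rw [div_le_div_iff₀ (by linarith) (by linarith)]
  nlinarith

lemma monotoneOn_critical_ratio :
    MonotoneOn (fun r : ℝ => (2 * r ^ 2 + 8) / (r - 2) ^ 2) (Set.Ico (-2) 2) := by
  intro r₁ ⟨h₁, h₁'⟩ r₂ ⟨_, h₂'⟩ h
  simp only [← one_add_sq_div_two_sub h₁'.ne, ← one_add_sq_div_two_sub h₂'.ne]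
  gcongr 1 + ?_ ^ 2
  · exact div_nonneg (by linarith) (by linarith)
  · exact monotoneOn_two_add_div_two_sub h₁' h₂' h

theorem local_search_ratio_critical_value
    (g : ℝ → ℝ → ℝ)
    (hg : ∀ x r : ℝ, g x r =
      (2 * x ^ (2 * r) - 2 * r * x ^ r - 2) / ((2 - r) * x ^ r - 2)) :
    (∀ r : ℝ, 0 < r → r ≤ 1 →
        g (((2 + r) / (2 - r)) ^ (1 / r)) r = (2 * r ^ 2 + 8) / (r - 2) ^ 2) ∧
    (∀ r₁ r₂ : ℝ, 0 < r₁ → r₁ ≤ r₂ → r₂ ≤ 1 →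
        (2 * r₁ ^ 2 + 8) / (r₁ - 2) ^ 2 ≤ (2 * r₂ ^ 2 + 8) / (r₂ - 2) ^ 2) ∧
    (2 * (1 : ℝ) ^ 2 + 8) / ((1 : ℝ) - 2) ^ 2 = 10 := by
  refine ⟨fun r hr hr₁ => ?_, fun r₁ r₂ h₁ h h₂ => ?_, by norm_num⟩
  · have h2r : (2 : ℝ) - r ≠ 0 := by linarith
    have ht : 0 ≤ (2 + r) / (2 - r) := div_nonneg (by linarith) (by linarith)
    rw [hg, rpow_one_div_rpow_two_mul ht hr.ne', one_div, Real.rpow_inv_rpow ht hr.ne',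
      div_eq_one_add_sq_of_mul_eq hr.ne' (mul_div_cancel₀ _ h2r),
      one_add_sq_div_two_sub (by linarith)]
  · exact monotoneOn_critical_ratio ⟨by linarith, by linarith⟩ ⟨by linarith, by linarith⟩ h
end
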